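/- Let (X,σ) be a shift space with language 𝓛, and let 𝓖 ⊆ 𝓛 have (S)-specification with gap size t. Then #𝓖_n ≤ e^{(n+t) h(𝓛)} for every n ∈ ℕ. -/

import Mathlib

open MeasureTheory Filter Topology
open scoped ENNReal

/-- The full two-sided shift on `p` symbols. -/
abbrev FullShift (p : ℕ) : Type := ℤ → Fin p

/-- The left shift map. -/
def shiftMap {p : ℕ} : FullShift p → FullShift p := fun x n => x (n + 1)

/-- A (two-sided) shift space: a nonempty closed shift-invariant subset of the full shift. -/
def IsShiftSpace {p : ℕ} (X : Set (FullShift p)) : Prop :=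
  X.Nonempty ∧ IsClosed X ∧ shiftMap '' X = X

/-- `x` spells the word `w` starting at position `k`. -/
def spellsAt {p : ℕ} (x : FullShift p) (k : ℤ) (w : List (Fin p)) : Prop :=
  ∀ i : Fin w.length, x (k + (i : ℕ)) = w.get i

/-- The language of a shift space: all finite words occurring in its sequences. -/
def language {p : ℕ} (X : Set (FullShift p)) : Set (List (Fin p)) :=
  {w | ∃ x ∈ X, ∃ k : ℤ, spellsAt x k w}

/-- Words of length `n` in a collection `D`. -/
def wordsOfLen {p : ℕ} (D : Set (List (Fin p))) (n : ℕ) : Set (List (Fin p)) :=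
  {w ∈ D | w.length = n}

/-- Exponential growth rate `h(D) = limsup (1/n) log #D_n` of a collection of words. -/
noncomputable def growth {p : ℕ} (D : Set (List (Fin p))) : ℝ :=
  Filter.atTop.limsup fun n : ℕ => Real.log ((wordsOfLen D n).ncard) / n

/-- Topological entropy of a shift space (= the growth rate of its language). -/
noncomputable def htop {p : ℕ} (X : Set (FullShift p)) : ℝ := growth (language X)

/-- `glueWords m w v = w 0 ++ v 0 ++ w 1 ++ v 1 ++ ⋯ ++ v (m-1) ++ w m`. -/
def glueWords {p : ℕ} : ℕ → (ℕ → List (Fin p)) → (ℕ → List (Fin p)) → List (Fin p)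
  | 0, w, _ => w 0
  | (m + 1), w, v => glueWords m w v ++ v m ++ w (m + 1)

/-- (S)-specification on `G ⊆ L` with gap size `t`. -/
def HasSpecS {p : ℕ} (L G : Set (List (Fin p))) (t : ℕ) : Prop :=
  ∀ (m : ℕ) (w : ℕ → List (Fin p)), (∀ i ≤ m, w i ∈ G) →
    ∃ v : ℕ → List (Fin p), (∀ i < m, v i ∈ L ∧ (v i).length = t) ∧
      glueWords m w v ∈ L

/-- The central cylinder of a word `w`, starting at position `-⌊|w|/2⌋`. -/
def centralCylinder {p : ℕ} (w : List (Fin p)) : Set (FullShift p) :=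
  {x | spellsAt x (-((w.length / 2 : ℕ) : ℤ)) w}

/-- (Per)-specification on `G` with gap size `t`: the glued word can moreover be realized by
a periodic point of period exactly `|x| + t`. -/
def HasSpecPer {p : ℕ} (X : Set (FullShift p)) (G : Set (List (Fin p))) (t : ℕ) : Prop :=
  ∀ (m : ℕ) (w : ℕ → List (Fin p)), (∀ i ≤ m, w i ∈ G) →
    ∃ v : ℕ → List (Fin p), (∀ i < m, v i ∈ language X ∧ (v i).length = t) ∧
      glueWords m w v ∈ language X ∧
      ∃ z ∈ X, shiftMap^[(glueWords m w v).length + t] z = z ∧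
        z ∈ centralCylinder (glueWords m w v)

/-- A decomposition `L = 𝓒ᵖ 𝓖 𝓒ˢ` of a language. -/
def Decomp {p : ℕ} (L Cp G Cs : Set (List (Fin p))) : Prop :=
  Cp ⊆ L ∧ G ⊆ L ∧ Cs ⊆ L ∧
    ∀ w ∈ L, ∃ u v x, u ∈ Cp ∧ v ∈ G ∧ x ∈ Cs ∧ w = u ++ v ++ x

/-- `𝓖(M)`: words of `L` decomposable with prefix and suffix of length at most `M`. -/
def GM {p : ℕ} (L Cp G Cs : Set (List (Fin p))) (M : ℕ) : Set (List (Fin p)) :=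
  {w ∈ L | ∃ u v x, u ∈ Cp ∧ v ∈ G ∧ x ∈ Cs ∧ u.length ≤ M ∧ x.length ≤ M ∧ w = u ++ v ++ x}

/-- Condition (III): uniformly controlled extension of words of `𝓖(M)` to words of `𝓖`. -/
def CondIII {p : ℕ} (L Cp G Cs : Set (List (Fin p))) : Prop :=
  ∀ M : ℕ, ∃ τ : ℕ, ∀ v ∈ GM L Cp G Cs M,
    ∃ u w : List (Fin p), u.length ≤ τ ∧ w.length ≤ τ ∧ u ++ v ++ w ∈ G

/-- Shift invariance of a measure. -/
def ShiftInvariant {p : ℕ} (μ : Measure (FullShift p)) : Prop :=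
  Measure.map shiftMap μ = μ

/-- Measure-theoretic (Kolmogorov–Sinai) entropy of a shift-invariant measure, computed via
the generating partitions into cylinders of length `n`. -/
noncomputable def entropyOf {p : ℕ} (μ : Measure (FullShift p)) : ℝ :=
  Filter.atTop.liminf fun n : ℕ =>
    (∑ w : Fin n → Fin p,
      Real.negMulLog (μ {x : FullShift p | ∀ i : Fin n, x ((i : ℕ) : ℤ) = w i}).toReal) / n

/-- `μ` is a measure of maximal entropy for the shift space `X`. -/
def IsMME {p : ℕ} (X : Set (FullShift p)) (μ : Measure (FullShift p)) : Prop :=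
  IsProbabilityMeasure μ ∧ ShiftInvariant μ ∧ μ X = 1 ∧ entropyOf μ = htop X

/-- A shift space is intrinsically ergodic if it has exactly one measure of maximal entropy. -/
def IntrinsicallyErgodic {p : ℕ} (X : Set (FullShift p)) : Prop :=
  ∃! μ : Measure (FullShift p), IsMME X μ

/-- The set of points of `X` periodic of period at most `n`. -/
def PerN {p : ℕ} (X : Set (FullShift p)) (n : ℕ) : Set (FullShift p) :=
  {x ∈ X | ∃ k, 1 ≤ k ∧ k ≤ n ∧ shiftMap^[k] x = x}

/-- The measure evenly distributed on the periodic points of period at most `n`. -/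
noncomputable def perMeasure {p : ℕ} (X : Set (FullShift p)) (n : ℕ) :
    Measure (FullShift p) :=
  (((PerN X n).ncard : ℝ≥0∞))⁻¹ •
    Measure.sum (fun x : (PerN X n) => Measure.dirac (x : FullShift p))

/-- Weak* convergence of a sequence of measures. -/
def WeakStarLimit {p : ℕ} (μs : ℕ → Measure (FullShift p)) (μ : Measure (FullShift p)) : Prop :=
  ∀ f : C(FullShift p, ℝ),
    Tendsto (fun n => ∫ x, f x ∂(μs n)) atTop (𝓝 (∫ x, f x ∂μ))

/-- `Y` is a subshift factor of `X`. -/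
def IsSubshiftFactor {p q : ℕ} (X : Set (FullShift p)) (Y : Set (FullShift q)) : Prop :=
  IsShiftSpace Y ∧ ∃ π : FullShift p → FullShift q,
    Continuous π ∧ π '' X = Y ∧ ∀ x ∈ X, π (shiftMap x) = shiftMap (π x)

/-!
Gluing any `m + 1` words of `𝓖_n` with the gaps provided by specification gives distinct words
of `𝓛` of length `n + m (n + t) ≤ (m + 1)(n + t)`, so `#𝓛_k ≥ (#𝓖_n)^{k/(n+t)}` along an
unbounded sequence of lengths `k`, and the limsup defining `h(𝓛)` is at least `log #𝓖_n / (n + t)`.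
-/

lemma log_natCast_le_log_natCast {a b : ℕ} (h : a ≤ b) : Real.log a ≤ Real.log b := by
  rcases a.eq_zero_or_pos with rfl | ha
  · simpa using Real.log_natCast_nonneg b
  · exact Real.log_le_log (by exact_mod_cast ha) (by exact_mod_cast h)

lemma log_div_le_log_div_of_pow_le {a b m s k : ℕ} (hab : a ^ (m + 1) ≤ b) (hk : 0 < k)
    (hks : k ≤ (m + 1) * s) : Real.log a / s ≤ Real.log b / k := by
  have hs : (0 : ℝ) < s := by exact_mod_cast Nat.pos_of_ne_zero (by rintro rfl; omega)
  have hk' : (0 : ℝ) < k := by exact_mod_cast hk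
  have hpow : (m + 1) * Real.log a ≤ Real.log b := by
    simpa [Real.log_pow] using log_natCast_le_log_natCast hab
  have hks' : (k : ℝ) ≤ (m + 1) * s := by exact_mod_cast hks
  calc Real.log a / s = (m + 1) * Real.log a / ((m + 1) * s) := by
        rw [mul_div_mul_left _ _ (by positivity)]
    _ ≤ Real.log b / ((m + 1) * s) := by gcongr
    _ ≤ Real.log b / k := by gcongr

section Words

variable {p : ℕ}

lemma wordsOfLen_subset_length_eq (D : Set (List (Fin p))) (k : ℕ) :
    wordsOfLen D k ⊆ {w | w.length = k} :=
  fun _ hw => hw.2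

lemma wordsOfLen_finite (D : Set (List (Fin p))) (k : ℕ) : (wordsOfLen D k).Finite :=
  (List.finite_length_eq (Fin p) k).subset (wordsOfLen_subset_length_eq D k)

lemma ncard_wordsOfLen_le_pow (D : Set (List (Fin p))) (k : ℕ) :
    (wordsOfLen D k).ncard ≤ p ^ k := by
  calc (wordsOfLen D k).ncard ≤ {w : List (Fin p) | w.length = k}.ncard :=
        Set.ncard_le_ncard (wordsOfLen_subset_length_eq D k) (List.finite_length_eq (Fin p) k)
    _ = Nat.card (List.Vector (Fin p) k) := (Nat.card_coe_set_eq _).symm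
    _ = p ^ k := by simp [Nat.card_eq_fintype_card, card_vector]

lemma log_ncard_wordsOfLen_div_le (D : Set (List (Fin p))) (k : ℕ) :
    Real.log (wordsOfLen D k).ncard / k ≤ Real.log p := by
  rcases k.eq_zero_or_pos with rfl | hk
  · simpa using Real.log_natCast_nonneg p
  · rw [div_le_iff₀ (by exact_mod_cast hk), mul_comm, ← Real.log_pow]
    exact_mod_cast log_natCast_le_log_natCast (ncard_wordsOfLen_le_pow D k)

lemma le_growth_of_frequently {D : Set (List (Fin p))} {c : ℝ}
    (h : ∃ᶠ k in atTop, c ≤ Real.log (wordsOfLen D k).ncard / k) : c ≤ growth D :=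
  le_limsup_of_frequently_le h (isBoundedUnder_of ⟨_, log_ncard_wordsOfLen_div_le D⟩)

lemma glueWords_length {m n t : ℕ} {w v : ℕ → List (Fin p)} (hw : ∀ i ≤ m, (w i).length = n)
    (hv : ∀ i < m, (v i).length = t) : (glueWords m w v).length = n + m * (n + t) := by
  induction m with
  | zero => simpa [glueWords] using hw 0 le_rfl
  | succ m ih =>
    rw [glueWords, List.length_append, List.length_append,
      ih (fun i hi => hw i (by omega)) (fun i hi => hv i (by omega)), hv m (by omega),
      hw (m + 1) le_rfl]
    ring

lemma glueWords_injective {m : ℕ} {w w' v v' : ℕ → List (Fin p)}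
    (hw : ∀ i ≤ m, (w i).length = (w' i).length) (hv : ∀ i < m, (v i).length = (v' i).length)
    (h : glueWords m w v = glueWords m w' v') : ∀ i ≤ m, w i = w' i := by
  induction m with
  | zero => simpa [glueWords] using h
  | succ m ih =>
    obtain ⟨h, hlast⟩ := List.append_inj' h (hw (m + 1) le_rfl)
    obtain ⟨h, -⟩ := List.append_inj' h (hv m (by omega))
    intro i hi
    rcases hi.lt_or_eq with hi | rfl
    · exact ih (fun j hj => hw j (by omega)) (fun j hj => hv j (by omega)) h i (by omega)
    · exact hlast

lemma ncard_wordsOfLen_pow_le {L G : Set (List (Fin p))} {t : ℕ} (hspec : HasSpecS L G t)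
    (n m : ℕ) :
    (wordsOfLen G n).ncard ^ (m + 1) ≤ (wordsOfLen L (n + m * (n + t))).ncard := by
  classical
  let pad (f : Fin (m + 1) → wordsOfLen G n) (i : ℕ) : List (Fin p) :=
    if h : i ≤ m then f ⟨i, by omega⟩ else []
  have pad_mem (f) (i) (hi : i ≤ m) : pad f i ∈ wordsOfLen G n := by
    simp [pad, hi]
  choose gap hgap hglue using fun f => hspec m (pad f) fun i hi => (pad_mem f i hi).1
  let glue (f : Fin (m + 1) → wordsOfLen G n) : wordsOfLen L (n + m * (n + t)) :=
    ⟨glueWords m (pad f) (gap f), hglue f,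
      glueWords_length (fun i hi => (pad_mem f i hi).2) fun i hi => (hgap f i hi).2⟩
  have glue_injective : glue.Injective := by
    intro f f' hff'
    funext i
    have := glueWords_injective
      (fun j hj => by rw [(pad_mem f j hj).2, (pad_mem f' j hj).2])
      (fun j hj => by rw [(hgap f j hj).2, (hgap f' j hj).2])
      (congrArg Subtype.val hff') i (by omega)
    simpa [pad, Nat.le_of_lt_succ i.2, Subtype.ext_iff] using this
  have := (wordsOfLen_finite L (n + m * (n + t))).to_subtype
  calc (wordsOfLen G n).ncard ^ (m + 1) = Nat.card (Fin (m + 1) → wordsOfLen G n) := by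
        rw [Nat.card_fun, Nat.card_coe_set_eq, Nat.card_fin]
    _ ≤ (wordsOfLen L (n + m * (n + t))).ncard := Nat.card_le_card_of_injective glue glue_injective

lemma log_ncard_wordsOfLen_le_mul_growth {L G : Set (List (Fin p))} {t : ℕ}
    (hspec : HasSpecS L G t) (n : ℕ) :
    Real.log (wordsOfLen G n).ncard ≤ (n + t) * growth L := by
  rcases (n + t).eq_zero_or_pos with hnt | hnt
  · obtain ⟨rfl, rfl⟩ : n = 0 ∧ t = 0 := by omega
    simpa using Real.log_nonpos (Nat.cast_nonneg _)
      (by exact_mod_cast ncard_wordsOfLen_le_pow G 0)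
  · rw [mul_comm, ← div_le_iff₀ (by exact_mod_cast hnt)]
    refine le_growth_of_frequently (frequently_atTop.2 fun N => ⟨n + (N + 1) * (n + t), ?_, ?_⟩)
    · nlinarith
    · exact_mod_cast log_div_le_log_div_of_pow_le (ncard_wordsOfLen_pow_le hspec n (N + 1))
        (by nlinarith) (by nlinarith)

lemma ncard_wordsOfLen_le_exp_growth {L G : Set (List (Fin p))} {t : ℕ}
    (hspec : HasSpecS L G t) (n : ℕ) :
    ((wordsOfLen G n).ncard : ℝ) ≤ Real.exp ((n + t) * growth L) := by
  rcases (wordsOfLen G n).ncard.eq_zero_or_pos with h | h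
  · rw [h, Nat.cast_zero]
    exact (Real.exp_pos _).le
  · exact (Real.log_le_iff_le_exp (by exact_mod_cast h)).1
      (log_ncard_wordsOfLen_le_mul_growth hspec n)

end Words

theorem card_G_le_of_spec_general {p : ℕ} (X : Set (FullShift p))
    (G : Set (List (Fin p)))
    (t : ℕ) (hspec : HasSpecS (language X) G t) (n : ℕ) :
    ((wordsOfLen G n).ncard : ℝ) ≤ Real.exp (((n : ℝ) + t) * htop X) :=
  ncard_wordsOfLen_le_exp_growth hspec n

/-- **Lemma 5.2.** If `𝓖 ⊆ 𝓛` has (S)-specification with gap size `t`, then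
`#𝓖_n ≤ e^{(n+t) h(𝓛)}` for every `n`. -/
theorem card_G_le_of_spec {p : ℕ} (X : Set (FullShift p)) (hX : IsShiftSpace X)
    (G : Set (List (Fin p))) (hG : G ⊆ language X)
    (t : ℕ) (hspec : HasSpecS (language X) G t) (n : ℕ) :
    ((wordsOfLen G n).ncard : ℝ) ≤ Real.exp (((n : ℝ) + t) * htop X) :=
  card_G_le_of_spec_general X G t hspec n
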